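/- arXiv:2511.08107 — 5 statements merged into one kernel-verified Lean document; each statement's English description precedes it below -/
import Mathlib

section
/- Let Ñ ≥ 1 be a natural number, let Ω_θ and Ω_r be real numbers with Ω_r ≠ 0, and let k be an integer that is not an integer multiple of Ñ. If q = (2k − Ñ·Ω_θ)/(2·Ñ·Ω_r), then Ω := 2·q·Ω_r + Ω_θ equals 2k/Ñ, sin(Ñ·π·Ω/2) = 0 while sin(π·Ω/2) ≠ 0, and consequently ∑_{ñ=1}^{Ñ} exp( i·π·(2ñ−Ñ−1)·Ω/2 ) = 0. -/
/-!
The kernel is a geometric sum with ratio `z = exp (iπΩ)`. Since `Ω = 2k/Ñ`, `z` is an `Ñ`-th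
root of unity, and `z ≠ 1` because `Ñ ∤ k`; in terms of sines these are exactly
`sin (ÑπΩ/2) = 0` and `sin (πΩ/2) ≠ 0`, so the geometric sum vanishes.
-/

open Finset Real

theorem geom_sum_Icc_eq_zero {R : Type*} [Ring R] [NoZeroDivisors R] {z : R} {N : ℕ}
    (hzN : z ^ N = 1) (hz : z ≠ 1) : ∑ n ∈ Icc 1 N, z ^ n = 0 := by
  have hrange : ∑ n ∈ range N, z ^ n = 0 := by
    have h := geom_sum_mul z N
    rw [hzN, sub_self] at h
    exact (mul_eq_zero.mp h).resolve_right (sub_ne_zero.mpr hz)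
  rw [← Ico_add_one_right_eq_Icc, sum_Ico_eq_sum_range, Nat.add_sub_cancel]
  simp only [pow_add, pow_one, ← mul_sum, hrange, mul_zero]

theorem Complex.exp_ofReal_mul_I_eq_one_iff (x : ℝ) :
    Complex.exp (x * Complex.I) = 1 ↔ Real.sin (x / 2) = 0 := by
  rw [Complex.exp_eq_one_iff, Real.sin_eq_zero_iff]
  refine exists_congr fun n => ?_
  have hcast : (n : ℂ) * (2 * π * Complex.I) = ((n * (2 * π) : ℝ) : ℂ) * Complex.I := by
    push_cast; ring
  rw [hcast, mul_left_inj' Complex.I_ne_zero, Complex.ofReal_inj]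
  constructor <;> intro h <;> linarith

theorem sin_pi_mul_int_div_ne_zero {N : ℕ} {k : ℤ} (hN : (N : ℝ) ≠ 0) (hk : ¬ (N : ℤ) ∣ k) :
    sin (π * k / N) ≠ 0 := by
  rw [Ne, sin_eq_zero_iff]
  rintro ⟨n, hn⟩
  field_simp at hn
  exact hk ⟨n, by exact_mod_cast (by linarith : (k : ℝ) = N * n)⟩

theorem sum_exp_steering_eq_zero (N : ℕ) (Ω : ℝ)
    (hN : sin (N * π * Ω / 2) = 0) (h1 : sin (π * Ω / 2) ≠ 0) :
    ∑ n ∈ Icc 1 N, Complex.exp (Complex.I * (π * ((2 * (n : ℝ) - N - 1) * Ω / 2))) = 0 := by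
  set z := Complex.exp ((π * Ω : ℝ) * Complex.I)
  set c := Complex.exp ((-(N + 1) * π * Ω / 2 : ℝ) * Complex.I)
  have hterm (n : ℕ) :
      Complex.exp (Complex.I * (π * ((2 * (n : ℝ) - N - 1) * Ω / 2))) = z ^ n * c := by
    rw [← Complex.exp_nat_mul, ← Complex.exp_add]
    push_cast
    ring_nf
  have hzN : z ^ N = 1 := by
    rw [← Complex.exp_nat_mul, ← Complex.ofReal_natCast, ← mul_assoc, ← Complex.ofReal_mul,
      Complex.exp_ofReal_mul_I_eq_one_iff, ← hN]
    ring_nf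
  have hz : z ≠ 1 := by
    rwa [Ne, Complex.exp_ofReal_mul_I_eq_one_iff]
  rw [sum_congr rfl fun n _ => hterm n, ← sum_mul, geom_sum_Icc_eq_zero hzN hz, zero_mul]

/-- Proposition 1 of the paper: for a movable subarray of `Nt` half-wavelength-spaced
antennas, choosing the subarray center position `q = (2k − Nt·Ωθ)/(2·Nt·Ωr)` with
`k` an integer that is not a multiple of `Nt` nulls the linearized steering-vector
correlation kernel. -/
theorem movable_subarray_nulling (Nt : ℕ) (hNt : 1 ≤ Nt) (Ωθ Ωr : ℝ) (hΩr : Ωr ≠ 0)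
    (k : ℤ) (hk : ¬ (Nt : ℤ) ∣ k) (q : ℝ)
    (hq : q = (2 * (k : ℝ) - (Nt : ℝ) * Ωθ) / (2 * (Nt : ℝ) * Ωr)) :
    2 * q * Ωr + Ωθ = 2 * (k : ℝ) / (Nt : ℝ) ∧
    Real.sin ((Nt : ℝ) * Real.pi * (2 * q * Ωr + Ωθ) / 2) = 0 ∧
    Real.sin (Real.pi * (2 * q * Ωr + Ωθ) / 2) ≠ 0 ∧
    ∑ n ∈ Finset.Icc 1 Nt,
        Complex.exp (Complex.I *
          (Real.pi * ((2 * (n : ℝ) - (Nt : ℝ) - 1) * (2 * q * Ωr + Ωθ) / 2))) = 0 := by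
  have hN : (Nt : ℝ) ≠ 0 := by positivity
  have hΩ : 2 * q * Ωr + Ωθ = 2 * (k : ℝ) / Nt := by
    subst hq
    field_simp
    ring
  have hsinN : sin (Nt * π * (2 * q * Ωr + Ωθ) / 2) = 0 := by
    rw [hΩ, show (Nt : ℝ) * π * (2 * k / Nt) / 2 = k * π by field_simp]
    exact sin_int_mul_pi k
  have hsin1 : sin (π * (2 * q * Ωr + Ωθ) / 2) ≠ 0 := by
    rw [hΩ, show π * (2 * k / Nt) / 2 = π * k / Nt by ring]
    exact sin_pi_mul_int_div_ne_zero hN hk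
  refine ⟨hΩ, hsinN, hsin1, ?_⟩
  exact_mod_cast sum_exp_steering_eq_zero Nt _ hsinN hsin1
end

section
/- Let ρ > 1, σ̃² > 0 and f ≥ 0. Let μ be the measure on ℝ given by Lebesgue measure with density p, where p(x) = 1/(2·ln(ρ)·x) for x ∈ [σ̃²/ρ, ρ·σ̃²] and p(x) = 0 otherwise, and for τ ∈ ℝ define ε(τ) = μ{x : x ≥ τ} + μ{x : x ≤ τ − f}. Then τ* = min(f + σ̃²/ρ, ρ·σ̃²) minimizes ε, i.e., ε(τ*) ≤ ε(τ) for every real τ. -/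
open MeasureTheory ENNReal

/-! The noise density vanishes below `σ̃²/ρ` and is antitone from there on. Hence for
`τ* = f + σ̃²/ρ` the miss-detection term vanishes, and shifting a piece `[τ*, τ)` of the
false-alarm region down by `f` lands it in the miss-detection region of `τ` without decreasing
its mass, so `ε(τ*) ≤ ε(τ)`. When `f + σ̃²/ρ > ρσ̃²`, the threshold `ρσ̃²` separates the two
hypotheses completely and `ε(ρσ̃²) = 0`. -/

open Set

noncomputable section

def noiseDensity (ρ σ2 : ℝ) (x : ℝ) : ℝ≥0∞ :=
  if x ∈ Icc (σ2 / ρ) (ρ * σ2) then ENNReal.ofReal (1 / (2 * Real.log ρ * x)) else 0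

def detectionError (μ : Measure ℝ) (f τ : ℝ) : ℝ≥0∞ :=
  μ (Ici τ) + μ (Iic (τ - f))

end

theorem antitoneOn_Ici_ite_Icc {a b : ℝ} {h : ℝ → ℝ≥0∞} (hh : AntitoneOn h (Icc a b)) :
    AntitoneOn (fun x => if x ∈ Icc a b then h x else 0) (Ici a) := by
  intro x hx y hy hxy
  by_cases hyab : y ∈ Icc a b
  · have hxab : x ∈ Icc a b := ⟨hx, hxy.trans hyab.2⟩
    simp only [if_pos hxab, if_pos hyab]
    exact hh hxab hyab hxy
  · simp only [if_neg hyab]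
    exact zero_le

theorem antitoneOn_Ici_noiseDensity {ρ σ2 : ℝ} (hρ : 1 < ρ) (hσ : 0 < σ2) :
    AntitoneOn (noiseDensity ρ σ2) (Ici (σ2 / ρ)) := by
  refine antitoneOn_Ici_ite_Icc fun x hx y hy hxy => ENNReal.ofReal_le_ofReal ?_
  have hx0 : 0 < x := (div_pos hσ (zero_lt_one.trans hρ)).trans_le hx.1
  have hlog : 0 < 2 * Real.log ρ := mul_pos two_pos (Real.log_pos hρ)
  exact one_div_le_one_div_of_le (mul_pos hlog hx0) (mul_le_mul_of_nonneg_left hxy hlog.le)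

section WithDensity

variable {g : ℝ → ℝ≥0∞}

theorem withDensity_Iic_eq_zero {a : ℝ} (hg : ∀ x < a, g x = 0) :
    volume.withDensity g (Iic a) = 0 := by
  rw [withDensity_apply' _, setLIntegral_congr Iio_ae_eq_Iic.symm]
  exact (setLIntegral_congr_fun measurableSet_Iio hg).trans (by simp)

theorem withDensity_Ici_eq_zero {b : ℝ} (hg : ∀ x, b < x → g x = 0) :
    volume.withDensity g (Ici b) = 0 := by
  rw [withDensity_apply' _, setLIntegral_congr Ioi_ae_eq_Ici.symm]
  exact (setLIntegral_congr_fun measurableSet_Ioi hg).trans (by simp)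

theorem withDensity_Ico_add_le {a x y f : ℝ} (hg : AntitoneOn g (Ici a)) (hx : a ≤ x)
    (hf : 0 ≤ f) :
    volume.withDensity g (Ico (x + f) (y + f)) ≤ volume.withDensity g (Ico x y) := by
  rw [withDensity_apply _ measurableSet_Ico, withDensity_apply _ measurableSet_Ico,
    ← image_add_const_Ico, ← (measurePreserving_add_right volume f).setLIntegral_comp_emb
      (measurableEmbedding_addRight f)]
  refine setLIntegral_mono' measurableSet_Ico fun t ht => hg ?_ ?_ (le_add_of_nonneg_right hf)
  · exact hx.trans ht.1
  · exact hx.trans (ht.1.trans (le_add_of_nonneg_right hf))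

theorem detectionError_withDensity_le {a f : ℝ} (hg₀ : ∀ x < a, g x = 0)
    (hg : AntitoneOn g (Ici a)) (hf : 0 ≤ f) (τ : ℝ) :
    detectionError (volume.withDensity g) f (f + a) ≤
      detectionError (volume.withDensity g) f τ := by
  set μ := volume.withDensity g
  rw [detectionError, add_sub_cancel_left, withDensity_Iic_eq_zero hg₀, add_zero, detectionError]
  rcases le_total τ (f + a) with hτ | hτ
  · exact (measure_mono (Ici_subset_Ici.2 hτ)).trans le_self_add
  have hshift : μ (Ico (f + a) τ) ≤ μ (Ico a (τ - f)) := by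
    have := withDensity_Ico_add_le (y := τ - f) hg le_rfl hf
    rwa [sub_add_cancel, add_comm a f] at this
  calc μ (Ici (f + a)) = μ (Ico (f + a) τ ∪ Ici τ) := by rw [Ico_union_Ici_eq_Ici hτ]
    _ ≤ μ (Ico (f + a) τ) + μ (Ici τ) := measure_union_le _ _
    _ ≤ μ (Iic (τ - f)) + μ (Ici τ) :=
      add_le_add_left
        (hshift.trans (measure_mono (Ico_subset_Iio_self.trans Iio_subset_Iic_self))) _
    _ = μ (Ici τ) + μ (Iic (τ - f)) := add_comm _ _

end WithDensity

/-- The optimal detection threshold claim: under the bounded noise-uncertainty model,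
the threshold `τ* = min(f + σ̃²/ρ, ρ σ̃²)` minimizes the total detection error
probability (false alarm plus miss detection). -/
theorem optimal_detection_threshold (ρ σ2 f : ℝ) (hρ : 1 < ρ) (hσ : 0 < σ2)
    (hf : 0 ≤ f) :
    let μ : Measure ℝ := MeasureTheory.volume.withDensity (fun x =>
      if x ∈ Set.Icc (σ2 / ρ) (ρ * σ2) then ENNReal.ofReal (1 / (2 * Real.log ρ * x))
      else 0)
    let ε : ℝ → ℝ≥0∞ := fun τ => μ {x | τ ≤ x} + μ {x | x ≤ τ - f}
    ∀ τ : ℝ, ε (min (f + σ2 / ρ) (ρ * σ2)) ≤ ε τ := by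
  intro μ ε τ
  change detectionError (volume.withDensity (noiseDensity ρ σ2)) f _ ≤
    detectionError (volume.withDensity (noiseDensity ρ σ2)) f τ
  have hbelow : ∀ x < σ2 / ρ, noiseDensity ρ σ2 x = 0 := fun x hx =>
    if_neg fun hmem => hx.not_ge hmem.1
  rcases le_or_gt (f + σ2 / ρ) (ρ * σ2) with hsep | hsep
  · rw [min_eq_left hsep]
    exact detectionError_withDensity_le hbelow (antitoneOn_Ici_noiseDensity hρ hσ) hf τ
  · have habove : ∀ x, ρ * σ2 < x → noiseDensity ρ σ2 x = 0 := fun x hx =>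
      if_neg fun hmem => hx.not_ge hmem.2
    have hmiss : volume.withDensity (noiseDensity ρ σ2) (Iic (ρ * σ2 - f)) = 0 :=
      measure_mono_null (Iic_subset_Iic.2 (by linarith)) (withDensity_Iic_eq_zero hbelow)
    rw [min_eq_right hsep.le, detectionError, withDensity_Ici_eq_zero habove, hmiss, add_zero]
    exact zero_le
end

section
/- Let ρ > 1, σ̃² > 0 and f ≥ 0. Let μ be the measure on ℝ given by Lebesgue measure with density p, where p(x) = 1/(2·ln(ρ)·x) for x ∈ [σ̃²/ρ, ρ·σ̃²] and p(x) = 0 otherwise, for τ ∈ ℝ let ε(τ) = μ{x : x ≥ τ} + μ{x : x ≤ τ − f}, and set τ* = min(f + σ̃²/ρ, ρ·σ̃²). Then ε(τ*) = 1 − ln(1 + ρ·f/σ̃²)/(2·ln(ρ)) if f ≤ σ̃²·(ρ − 1/ρ), and ε(τ*) = 0 if f > σ̃²·(ρ − 1/ρ). -/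
/-!
At `τ* = min (f + σ̃²/ρ) (ρσ̃²)` the miss-detection region `{x ≤ τ* - f}` meets the support
`[σ̃²/ρ, ρσ̃²]` in at most the point `σ̃²/ρ`, so `ε(τ*)` is the mass of `[τ*, ρσ̃²]`, namely
`(log (ρσ̃²) - log τ*) / (2 log ρ)`; this vanishes when `τ* = ρσ̃²` and equals
`1 - log (1 + ρf/σ̃²) / (2 log ρ)` when `τ* = f + σ̃²/ρ`.
-/

open MeasureTheory ENNReal Set

lemma lintegral_Icc_one_div_mul {c a b : ℝ} (hc : 0 < c) (ha : 0 < a) (hab : a ≤ b) :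
    ∫⁻ x in Icc a b, ENNReal.ofReal (1 / (c * x)) =
      ENNReal.ofReal ((Real.log b - Real.log a) / c) := by
  have hpos : ∀ x ∈ Icc a b, 0 < x := fun x hx => ha.trans_le hx.1
  have hint : IntegrableOn (fun x : ℝ => 1 / (c * x)) (Icc a b) :=
    (continuousOn_const.div (continuousOn_const.mul continuousOn_id) fun x hx =>
      mul_ne_zero hc.ne' (hpos x hx).ne').integrableOn_Icc
  have hnonneg : 0 ≤ᵐ[volume.restrict (Icc a b)] fun x : ℝ => 1 / (c * x) := by
    filter_upwards [ae_restrict_mem measurableSet_Icc] with x hx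
    have := hpos x hx
    positivity
  have h0 : (0 : ℝ) ∉ uIcc a b := by
    rw [uIcc_of_le hab]
    exact fun h => h.1.not_gt ha
  rw [← ofReal_integral_eq_lintegral_ofReal hint hnonneg, integral_Icc_eq_integral_Ioc,
    ← intervalIntegral.integral_of_le hab]
  simp only [one_div, mul_inv]
  rw [intervalIntegral.integral_const_mul, integral_inv h0, Real.log_div (by linarith) ha.ne']
  ring_nf

/-- For `c = log (b / a)` this is the log-uniform distribution on `[a, b]`. -/
noncomputable def reciprocalMeasure (c a b : ℝ) : Measure ℝ :=
  volume.withDensity fun x => if x ∈ Icc a b then ENNReal.ofReal (1 / (c * x)) else 0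

section reciprocalMeasure

variable {c a b : ℝ}

lemma reciprocalMeasure_apply {S : Set ℝ} (hS : MeasurableSet S) :
    reciprocalMeasure c a b S = ∫⁻ x in Icc a b ∩ S, ENNReal.ofReal (1 / (c * x)) := by
  rw [reciprocalMeasure, withDensity_apply _ hS, ← setLIntegral_indicator measurableSet_Icc]
  simp only [indicator_apply]

lemma reciprocalMeasure_Ici (hc : 0 < c) (ha : 0 < a) {τ : ℝ} (haτ : a ≤ τ) (hτb : τ ≤ b) :
    reciprocalMeasure c a b (Ici τ) = ENNReal.ofReal ((Real.log b - Real.log τ) / c) := by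
  have hinter : Icc a b ∩ Ici τ = Icc τ b := by
    ext x
    simp only [mem_inter_iff, mem_Icc, mem_Ici]
    exact ⟨fun h => ⟨h.2, h.1.2⟩, fun h => ⟨⟨haτ.trans h.1, h.2⟩, h.1⟩⟩
  rw [reciprocalMeasure_apply measurableSet_Ici, hinter,
    lintegral_Icc_one_div_mul hc (ha.trans_le haτ) hτb]

lemma reciprocalMeasure_Iic_eq_zero {τ : ℝ} (hτa : τ ≤ a) :
    reciprocalMeasure c a b (Iic τ) = 0 := by
  have hnull : volume (Icc a b ∩ Iic τ) = 0 :=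
    measure_mono_null (fun x hx => le_antisymm (hx.2.trans hτa) hx.1.1) Real.volume_singleton
  rw [reciprocalMeasure_apply measurableSet_Iic, setLIntegral_measure_zero _ _ hnull]

end reciprocalMeasure

/-- Equation (15) of the paper: the minimum detection error probability at the
optimal threshold `τ* = min(f + σ̃²/ρ, ρ σ̃²)`. -/
theorem minimum_detection_error_probability (ρ σ2 f : ℝ) (hρ : 1 < ρ) (hσ : 0 < σ2)
    (hf : 0 ≤ f) :
    let μ : Measure ℝ := MeasureTheory.volume.withDensity (fun x =>
      if x ∈ Set.Icc (σ2 / ρ) (ρ * σ2) then ENNReal.ofReal (1 / (2 * Real.log ρ * x))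
      else 0)
    let ε : ℝ → ℝ≥0∞ := fun τ => μ {x | τ ≤ x} + μ {x | x ≤ τ - f}
    let τs : ℝ := min (f + σ2 / ρ) (ρ * σ2)
    (f ≤ σ2 * (ρ - 1 / ρ) →
      ε τs = ENNReal.ofReal (1 - Real.log (1 + ρ * f / σ2) / (2 * Real.log ρ))) ∧
    (σ2 * (ρ - 1 / ρ) < f → ε τs = 0) := by
  intro μ ε τs
  have hρ0 : 0 < ρ := one_pos.trans hρ
  have hc : 0 < 2 * Real.log ρ := by have := Real.log_pos hρ; positivity
  have ha : 0 < σ2 / ρ := div_pos hσ hρ0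
  have hab : σ2 / ρ ≤ ρ * σ2 := ((div_lt_self hσ hρ).trans (lt_mul_of_one_lt_left hσ hρ)).le
  have hgap : σ2 * (ρ - 1 / ρ) = ρ * σ2 - σ2 / ρ := by ring
  have hε : ε τs = reciprocalMeasure (2 * Real.log ρ) (σ2 / ρ) (ρ * σ2) (Ici τs) +
      reciprocalMeasure (2 * Real.log ρ) (σ2 / ρ) (ρ * σ2) (Iic (τs - f)) := rfl
  constructor
  · intro hle
    have hτ : τs = f + σ2 / ρ := min_eq_left (by linarith)
    rw [hε, hτ, reciprocalMeasure_Ici hc ha (by linarith) (by linarith), add_sub_cancel_left,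
      reciprocalMeasure_Iic_eq_zero le_rfl, add_zero]
    have hratio : ρ * σ2 / (f + σ2 / ρ) = ρ ^ 2 / (1 + ρ * f / σ2) := by
      field_simp
      ring
    have hlog : Real.log (ρ * σ2) - Real.log (f + σ2 / ρ) =
        2 * Real.log ρ - Real.log (1 + ρ * f / σ2) := by
      rw [← Real.log_div (by positivity) (by positivity), hratio,
        Real.log_div (by positivity) (by positivity), Real.log_pow, Nat.cast_ofNat]
    rw [hlog, sub_div, div_self hc.ne']
  · intro hlt
    have hτ : τs = ρ * σ2 := min_eq_right (by linarith)
    rw [hε, hτ, reciprocalMeasure_Ici hc ha (by linarith) le_rfl, sub_self, zero_div,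
      ENNReal.ofReal_zero, zero_add, reciprocalMeasure_Iic_eq_zero (by linarith)]
end

section
/- For all real numbers γ ≥ 0 and γ₀ ≥ 0, ln(1 + γ) ≥ ln(1 + γ₀) − γ₀ + (1 + γ₀)·γ/(1 + γ), with equality if and only if γ = γ₀. -/
/-- Lagrangian-dual-transform lower bound on the logarithmic rate function used in
the SCA surrogate construction, with equality iff `γ = γ₀`. -/
theorem lagrangian_dual_transform_bound (γ γ0 : ℝ) (hγ : 0 ≤ γ) (hγ0 : 0 ≤ γ0) :
    Real.log (1 + γ) ≥ Real.log (1 + γ0) - γ0 + (1 + γ0) * γ / (1 + γ) ∧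
    (Real.log (1 + γ) = Real.log (1 + γ0) - γ0 + (1 + γ0) * γ / (1 + γ) ↔ γ = γ0) := by
  have h1 : (0:ℝ) < 1 + γ := by linarith
  have h0 : (0:ℝ) < 1 + γ0 := by linarith
  set x : ℝ := (1 + γ0) / (1 + γ) with hxdef
  have hxpos : 0 < x := div_pos h0 h1
  have hlogx : Real.log x = Real.log (1 + γ0) - Real.log (1 + γ) :=
    Real.log_div (ne_of_gt h0) (ne_of_gt h1)
  have hterm : (1 + γ0) * γ / (1 + γ) = (1 + γ0) - x := by
    rw [hxdef]; field_simp; ring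
  have hle : Real.log x ≤ x - 1 := Real.log_le_sub_one_of_pos hxpos
  refine ⟨by rw [hterm]; linarith, ?_, ?_⟩
  · intro heq
    rw [hterm] at heq
    have hlx : Real.log x = x - 1 := by linarith
    by_contra hne
    have hx1 : x ≠ 1 := by
      intro hx1
      apply hne
      rw [hxdef, div_eq_one_iff_eq (ne_of_gt h1)] at hx1
      linarith
    exact absurd hlx (ne_of_lt (Real.log_lt_sub_one_of_pos hxpos hx1))
  · intro h
    subst h
    rw [hterm, hxdef, div_self (ne_of_gt h1)]
    ring
end

section
/- Let ζ, ζ₀ be complex numbers and ϑ, ϑ₀ > 0 real numbers. Then ln(1 + |ζ|²/ϑ) ≥ ln(1 + |ζ₀|²/ϑ₀) − |ζ₀|²/ϑ₀ + 2·Re(conj(ζ₀)·ζ)/ϑ₀ − (|ζ₀|²·(|ζ|² + ϑ))/(ϑ₀·(|ζ₀|² + ϑ₀)). Moreover, equality holds when ζ = ζ₀ and ϑ = ϑ₀. -/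
/-!
Write `u = 1 + x² / ϑ` and `u₀ = 1 + x₀² / ϑ₀` with `x = ‖ζ‖`, `x₀ = ‖ζ₀‖`. Applying `log t ≤ t - 1`
at `t = u₀ / u` gives `log u ≥ log u₀ + 1 - u₀ / u`. By an exact algebraic identity, `1 - u₀ / u` equals
the surrogate minus `log u₀`, with `Re (conj ζ₀ ζ)` replaced by `x₀ x`, plus `1 / ϑ₀` times the AM-GM gap
`s x² + x₀² / s - 2 x₀ x ≥ 0`, where `s = (x₀² + ϑ₀) / (x² + ϑ)`. Finally `Re (conj ζ₀ ζ) ≤ x₀ x`.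
-/

open ComplexConjugate

lemma Real.log_add_one_sub_div_le_log {x y : ℝ} (hx : 0 < x) (hy : 0 < y) :
    Real.log y + 1 - y / x ≤ Real.log x := by
  have h := Real.one_sub_inv_le_log_of_pos (div_pos hx hy)
  rw [inv_div, Real.log_div hx.ne' hy.ne'] at h
  linarith

lemma two_mul_mul_le_mul_sq_add_sq_div {s : ℝ} (hs : 0 < s) (x y : ℝ) :
    2 * x * y ≤ s * x ^ 2 + y ^ 2 / s := by
  have h : s * x ^ 2 + y ^ 2 / s - 2 * x * y = (s * x - y) ^ 2 / s := by
    field_simp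
    ring
  linarith [div_nonneg (sq_nonneg (s * x - y)) hs.le]

lemma log_one_add_sq_div_ge {x x₀ r b b₀ : ℝ} (hb : 0 < b) (hb₀ : 0 < b₀) (hr : r ≤ x₀ * x) :
    Real.log (1 + x₀ ^ 2 / b₀) - x₀ ^ 2 / b₀ + 2 * r / b₀ -
        x₀ ^ 2 * (x ^ 2 + b) / (b₀ * (x₀ ^ 2 + b₀)) ≤ Real.log (1 + x ^ 2 / b) := by
  have hc : 0 < x ^ 2 + b := by positivity
  have hc₀ : 0 < x₀ ^ 2 + b₀ := by positivity
  set s := (x₀ ^ 2 + b₀) / (x ^ 2 + b)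
  have hs : 0 < s := by positivity
  have hlog := Real.log_add_one_sub_div_le_log (x := 1 + x ^ 2 / b) (y := 1 + x₀ ^ 2 / b₀)
    (by positivity) (by positivity)
  have hamgm : 2 * r / b₀ ≤ (s * x ^ 2 + x₀ ^ 2 / s) / b₀ := by
    gcongr
    linarith [two_mul_mul_le_mul_sq_add_sq_div hs x x₀]
  have hsplit : 1 - (1 + x₀ ^ 2 / b₀) / (1 + x ^ 2 / b) =
      -(x₀ ^ 2 / b₀) + (s * x ^ 2 + x₀ ^ 2 / s) / b₀ - x₀ ^ 2 * (x ^ 2 + b) / (b₀ * (x₀ ^ 2 + b₀)) := by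
    simp only [s]
    field_simp
    ring
  linarith

lemma Complex.re_conj_mul_le_norm_mul (w z : ℂ) : (conj w * z).re ≤ ‖w‖ * ‖z‖ := by
  simpa using Complex.re_le_norm (conj w * z)

/-- The tight concave surrogate lower bound (up to the factor `1/ln 2`) constructed
in the paper's SCA-based digital beamforming optimization, with equality at the
previous iterate `(ζ₀, ϑ₀)`. -/
theorem sca_surrogate_lower_bound (ζ ζ0 : ℂ) (ϑ ϑ0 : ℝ) (hϑ : 0 < ϑ) (hϑ0 : 0 < ϑ0) :
    Real.log (1 + ‖ζ‖ ^ 2 / ϑ) ≥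
      Real.log (1 + ‖ζ0‖ ^ 2 / ϑ0) - ‖ζ0‖ ^ 2 / ϑ0 +
        2 * (starRingEnd ℂ ζ0 * ζ).re / ϑ0 -
        ‖ζ0‖ ^ 2 * (‖ζ‖ ^ 2 + ϑ) / (ϑ0 * (‖ζ0‖ ^ 2 + ϑ0)) ∧
    (ζ = ζ0 → ϑ = ϑ0 →
      Real.log (1 + ‖ζ‖ ^ 2 / ϑ) =
        Real.log (1 + ‖ζ0‖ ^ 2 / ϑ0) - ‖ζ0‖ ^ 2 / ϑ0 +
          2 * (starRingEnd ℂ ζ0 * ζ).re / ϑ0 -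
          ‖ζ0‖ ^ 2 * (‖ζ‖ ^ 2 + ϑ) / (ϑ0 * (‖ζ0‖ ^ 2 + ϑ0))) := by
  refine ⟨log_one_add_sq_div_ge hϑ hϑ0 (Complex.re_conj_mul_le_norm_mul ζ0 ζ), ?_⟩
  rintro rfl rfl
  have hre : (conj ζ * ζ).re = ‖ζ‖ ^ 2 := by
    rw [Complex.conj_mul']
    norm_cast
  rw [hre]
  field_simp
  ring
end
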